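/- In the ring of formal power series over a commutative ℚ-algebra containing a, the identity (1−t−u)^{−a} = (1−t)^{−a}·(1−u)^{−a}·Σ_{k≥0} C(a+k−1,k)·(t/(1−t))^k·(u/(1−u))^k holds in the formal power series ring in two variables t, u, where (1−s)^{−a} = Σ_{n≥0} a^{(n)} s^n/n! and C(a+k−1,k) = a^{(k)}/k!. -/

import Mathlib

/-!
Write `c_n(a) = a⁽ⁿ⁾/n!` for the coefficients of `(1-s)^{-a}`. The coefficient of `tⁱuʲ` on the
left is `C(i+j,i) c_{i+j}(a)`. On the right, `(1-s)^{-a} (s/(1-s))ⁿ = sⁿ (1-s)^{-(a+n)}`, and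
`a⁽ⁿ⁾ (a+n)⁽ⁱ⁻ⁿ⁾ = a⁽ⁱ⁾` gives `c_n(a) c_{i-n}(a+n) = C(i,n) c_i(a)`. So the coefficient of `tⁱ`
on the right is `c_i(a)` times `(1-u)^{-a} Σₙ C(i,n) (u/(1-u))ⁿ = (1-u)^{-a} (1-u)^{-i}`, whose
`uʲ`-coefficient `c_j(a+i)` satisfies `c_i(a) c_j(a+i) = C(i+j,i) c_{i+j}(a)` once more.
-/

open PowerSeries

variable {R : Type*}

/-- Substitution `f(g)` of a two-variable series `g` with zero constant term
into a one-variable series `f` (each coefficient is a finite sum since `gⁿ`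
has order `≥ n`). -/
noncomputable def psubst [CommRing R] (g : MvPowerSeries (Fin 2) R) (f : PowerSeries R) :
    MvPowerSeries (Fin 2) R :=
  fun e => ∑ n ∈ Finset.range (e.sum (fun _ m => m) + 1),
    MvPowerSeries.coeff e (MvPowerSeries.C (σ := Fin 2) (R := R) (PowerSeries.coeff n f) * g ^ n)

/-- The series `f` regarded as a series in the variable `Xᵢ` of `R[[t,u]]`. -/
noncomputable def embed [CommRing R] (i : Fin 2) (f : PowerSeries R) :
    MvPowerSeries (Fin 2) R :=
  psubst (MvPowerSeries.X i) f

/-- The binomial series `(1−s)^{−a} = Σ_{n≥0} a⁽ⁿ⁾ sⁿ/n!`, where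
`a⁽ⁿ⁾ = a(a+1)⋯(a+n−1)` is the rising factorial. -/
noncomputable def binomSeries [CommRing R] [Algebra ℚ R] (a : R) : PowerSeries R :=
  PowerSeries.mk fun n => ((n.factorial : ℚ)⁻¹) • (ascPochhammer R n).eval a

/-- The series `s/(1−s) = Σ_{n≥1} sⁿ`. -/
noncomputable def geomSeries [CommRing R] : PowerSeries R :=
  PowerSeries.mk fun n => if n = 0 then 0 else 1

open Finset

section OneVariable
variable [CommRing R]

lemma ascPochhammer_succ_eval_left (a : R) (n : ℕ) :
    (ascPochhammer R (n + 1)).eval a = a * (ascPochhammer R n).eval (a + 1) := by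
  simp [ascPochhammer_succ_left]

@[simp]
lemma constantCoeff_geomSeries : constantCoeff (geomSeries : R⟦X⟧) = 0 := by
  simp [geomSeries, ← coeff_zero_eq_constantCoeff_apply]

lemma X_mul_one_add_geomSeries : X * (1 + geomSeries) = (geomSeries : R⟦X⟧) := by
  ext (_ | n)
  · simp [geomSeries]
  · by_cases hn : n = 0 <;> simp [geomSeries, coeff_succ_X_mul, coeff_one, hn]

lemma one_add_geomSeries_mul_one_sub_X : (1 + geomSeries) * (1 - X) = (1 : R⟦X⟧) := by
  rw [mul_one_sub, mul_comm, X_mul_one_add_geomSeries, add_sub_cancel_right]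

variable [Algebra ℚ R]

@[simp]
lemma coeff_binomSeries (a : R) (n : ℕ) :
    coeff n (binomSeries a) = ((n.factorial : ℚ)⁻¹) • (ascPochhammer R n).eval a :=
  coeff_mk _ _

@[simp]
lemma constantCoeff_binomSeries (a : R) : constantCoeff (binomSeries a) = 1 := by
  simp [← coeff_zero_eq_constantCoeff_apply]

lemma one_sub_X_mul_binomSeries_add_one (a : R) :
    (1 - X) * binomSeries (a + 1) = binomSeries a := by
  ext (_ | n)
  · simp [sub_mul]
  · have hfact :
        (n.factorial : ℚ)⁻¹ = ((n + 1 : ℕ) : ℚ) • ((n + 1).factorial : ℚ)⁻¹ := by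
      rw [smul_eq_mul, Nat.factorial_succ]; push_cast; field_simp
    rw [sub_mul, one_mul, map_sub, coeff_succ_X_mul, coeff_binomSeries, coeff_binomSeries,
      coeff_binomSeries, hfact, smul_assoc, smul_comm, ← smul_sub, Nat.cast_smul_eq_nsmul,
      nsmul_eq_mul, ascPochhammer_succ_eval, ascPochhammer_succ_eval_left]
    congr 1
    push_cast
    ring

lemma one_sub_X_pow_mul_binomSeries_add_natCast (a : R) (k : ℕ) :
    (1 - X) ^ k * binomSeries (a + k) = binomSeries a := by
  induction k with
  | zero => simp
  | succ k ih =>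
    rw [pow_succ, mul_assoc, Nat.cast_succ, ← add_assoc, one_sub_X_mul_binomSeries_add_one, ih]

lemma binomSeries_mul_one_add_geomSeries_pow (a : R) (k : ℕ) :
    binomSeries a * (1 + geomSeries) ^ k = binomSeries (a + k) := by
  rw [← one_sub_X_pow_mul_binomSeries_add_natCast a k, mul_comm, ← mul_assoc, ← mul_pow,
    one_add_geomSeries_mul_one_sub_X, one_pow, one_mul]

lemma binomSeries_mul_geomSeries_pow (a : R) (k : ℕ) :
    binomSeries a * geomSeries ^ k = X ^ k * binomSeries (a + k) := by
  conv_lhs => rw [← X_mul_one_add_geomSeries]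
  rw [mul_pow, mul_left_comm, binomSeries_mul_one_add_geomSeries_pow]

lemma coeff_binomSeries_mul_coeff_binomSeries_add (a : R) (n m : ℕ) :
    coeff n (binomSeries a) * coeff m (binomSeries (a + n)) =
      ((n + m).choose n : R) * coeff (n + m) (binomSeries a) := by
  have hfact : ((n.factorial : ℚ))⁻¹ * (m.factorial : ℚ)⁻¹ =
      ((n + m).choose n : ℚ) * ((n + m).factorial : ℚ)⁻¹ := by
    have hchoose : ((n + m).choose n : ℚ) ≠ 0 := by
      exact_mod_cast (Nat.choose_pos (Nat.le_add_right n m)).ne'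
    rw [← Nat.add_choose_mul_factorial_mul_factorial n m, ← Nat.choose_symm_add]
    push_cast
    field_simp
  simp only [coeff_binomSeries]
  rw [smul_mul_smul_comm, hfact, ← ascPochhammer_mul, Polynomial.eval_mul, Polynomial.eval_comp,
    Polynomial.eval_add, Polynomial.eval_X, Polynomial.eval_natCast, mul_smul,
    Nat.cast_smul_eq_nsmul, nsmul_eq_mul]

lemma coeff_binomSeries_mul_coeff_binomSeries_mul_geomSeries_pow (a : R) (n i : ℕ) :
    coeff n (binomSeries a) * coeff i (binomSeries a * geomSeries ^ n) =
      (i.choose n : R) * coeff i (binomSeries a) := by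
  rw [binomSeries_mul_geomSeries_pow, coeff_X_pow_mul']
  split_ifs with h
  · obtain ⟨m, rfl⟩ := Nat.exists_eq_add_of_le h
    rw [Nat.add_sub_cancel_left, coeff_binomSeries_mul_coeff_binomSeries_add]
  · rw [mul_zero, Nat.choose_eq_zero_of_lt (not_le.mp h), Nat.cast_zero, zero_mul]

lemma sum_choose_mul_coeff_binomSeries_mul_geomSeries_pow (a : R) {i N : ℕ} (h : i ≤ N)
    (j : ℕ) :
    ∑ n ∈ range (N + 1), (i.choose n : R) * coeff j (binomSeries a * geomSeries ^ n) =
      coeff j (binomSeries (a + i)) := by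
  rw [← binomSeries_mul_one_add_geomSeries_pow, add_comm 1, add_pow, mul_sum, map_sum]
  simp only [one_pow, mul_one, ← mul_assoc, ← map_natCast (C : R →+* R⟦X⟧), coeff_mul_C]
  simp only [mul_comm _ ((Nat.choose _ _ : ℕ) : R)]
  refine (sum_subset (range_subset_range.mpr (by omega)) fun n _ hn => ?_).symm
  rw [mem_range, not_lt] at hn
  rw [Nat.choose_eq_zero_of_lt hn, Nat.cast_zero, zero_mul]
end OneVariable

section TwoVariables
variable [CommRing R]

lemma MvPowerSeries.coeff_pow_eq_zero_of_degree_lt {σ : Type*} {g : MvPowerSeries σ R}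
    (hg : constantCoeff g = 0) {d : σ →₀ ℕ} {n : ℕ} (h : d.degree < n) :
    coeff d (g ^ n) = 0 :=
  coeff_of_lt_order <| (Nat.cast_lt.mpr h).trans_le (le_order_pow_of_constantCoeff_eq_zero n hg)

lemma Finsupp.degree_fin_two (e : Fin 2 →₀ ℕ) : e.degree = e 0 + e 1 := by
  rw [Finsupp.degree_eq_sum, Fin.sum_univ_two]

lemma coeff_psubst (g : MvPowerSeries (Fin 2) R) (f : R⟦X⟧) (e : Fin 2 →₀ ℕ) :
    MvPowerSeries.coeff e (psubst g f) =
      ∑ n ∈ range (e.degree + 1), coeff n f * MvPowerSeries.coeff e (g ^ n) := by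
  simp only [← MvPowerSeries.coeff_C_mul]
  rfl

lemma psubst_eq_subst {g : MvPowerSeries (Fin 2) R} (hg : MvPowerSeries.constantCoeff g = 0)
    (f : R⟦X⟧) : psubst g f = subst g f := by
  ext e
  rw [coeff_psubst, coeff_subst (HasSubst.of_constantCoeff_zero hg),
    finsum_eq_sum_of_support_subset _ (s := range (e.degree + 1))]
  · simp only [smul_eq_mul]
  · intro n hn
    by_contra hlt
    simp only [coe_range, Set.mem_Iio, not_lt, Order.add_one_le_iff] at hlt
    exact hn (by dsimp only; rw [MvPowerSeries.coeff_pow_eq_zero_of_degree_lt hg hlt, smul_zero])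

lemma embed_eq_subst (i : Fin 2) (f : R⟦X⟧) : embed i f = subst (MvPowerSeries.X i) f :=
  psubst_eq_subst (MvPowerSeries.constantCoeff_X i) f

lemma embed_X (i : Fin 2) : embed i (X : R⟦X⟧) = MvPowerSeries.X i := by
  rw [embed_eq_subst, subst_X (HasSubst.X i)]

lemma embed_mul (i : Fin 2) (f g : R⟦X⟧) : embed i (f * g) = embed i f * embed i g := by
  simp only [embed_eq_subst, subst_mul (HasSubst.X i)]

lemma embed_pow (i : Fin 2) (f : R⟦X⟧) (n : ℕ) : embed i (f ^ n) = embed i f ^ n := by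
  simp only [embed_eq_subst, subst_pow (HasSubst.X i)]

lemma coeff_embed (i : Fin 2) (f : R⟦X⟧) (e : Fin 2 →₀ ℕ) :
    MvPowerSeries.coeff e (embed i f) =
      if e = Finsupp.single i (e i) then coeff (e i) f else 0 := by
  rw [embed_eq_subst, coeff_subst_single]

lemma coeff_embed_zero_mul_embed_one (f g : R⟦X⟧) (e : Fin 2 →₀ ℕ) :
    MvPowerSeries.coeff e (embed 0 f * embed 1 g) = coeff (e 0) f * coeff (e 1) g := by
  have he : e = Finsupp.single 0 (e 0) + Finsupp.single 1 (e 1) := by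
    ext i; fin_cases i <;> simp
  rw [MvPowerSeries.coeff_mul,
    sum_eq_single_of_mem (Finsupp.single 0 (e 0), Finsupp.single 1 (e 1)) (by simp [← he])]
  · simp [coeff_embed]
  · rintro ⟨p, q⟩ hpq hne
    rw [HasAntidiagonal.mem_antidiagonal] at hpq
    rw [coeff_embed, coeff_embed]
    split_ifs with hp hq
    · dsimp only at hp hq
      subst hpq
      rw [hp, hq] at hne
      simp at hne
    all_goals simp

lemma coeff_mul_psubst {g : MvPowerSeries (Fin 2) R} (hg : MvPowerSeries.constantCoeff g = 0)
    (h : MvPowerSeries (Fin 2) R) (f : R⟦X⟧) (e : Fin 2 →₀ ℕ) :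
    MvPowerSeries.coeff e (h * psubst g f) =
      ∑ n ∈ range (e.degree + 1), coeff n f * MvPowerSeries.coeff e (h * g ^ n) := by
  have hterm : ∀ p ∈ antidiagonal e,
      MvPowerSeries.coeff p.1 h * MvPowerSeries.coeff p.2 (psubst g f) =
        ∑ n ∈ range (e.degree + 1),
          coeff n f * (MvPowerSeries.coeff p.1 h * MvPowerSeries.coeff p.2 (g ^ n)) := by
    intro p hp
    have hdeg : p.2.degree ≤ e.degree := by
      rw [← HasAntidiagonal.mem_antidiagonal.mp hp, map_add]; omega
    rw [coeff_psubst, mul_sum]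
    refine sum_subset_zero_on_sdiff (range_subset_range.mpr (by omega)) (fun n hn => ?_)
      (fun n _ => by ring)
    rw [mem_sdiff, mem_range, mem_range, not_lt] at hn
    rw [MvPowerSeries.coeff_pow_eq_zero_of_degree_lt hg (by omega), mul_zero, mul_zero]
  simp only [MvPowerSeries.coeff_mul, sum_congr rfl hterm]
  rw [sum_comm]
  simp only [← mul_sum]

lemma coeff_X_zero_add_X_one_pow (e : Fin 2 →₀ ℕ) (n : ℕ) :
    MvPowerSeries.coeff e ((MvPowerSeries.X 0 + MvPowerSeries.X 1 : MvPowerSeries (Fin 2) R) ^ n) =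
      if e 0 + e 1 = n then (n.choose (e 0) : R) else 0 := by
  rw [← embed_X 0, ← embed_X 1, add_pow, map_sum]
  simp only [← embed_pow, ← map_natCast (MvPowerSeries.C : R →+* MvPowerSeries (Fin 2) R),
    MvPowerSeries.coeff_mul_C, coeff_embed_zero_mul_embed_one, coeff_X_pow, ite_mul, one_mul,
    zero_mul, sum_ite_eq, mem_range]
  split_ifs <;> first | rfl | omega

lemma coeff_psubst_X_zero_add_X_one (f : R⟦X⟧) (e : Fin 2 →₀ ℕ) :
    MvPowerSeries.coeff e (psubst (MvPowerSeries.X 0 + MvPowerSeries.X 1) f) =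
      ((e 0 + e 1).choose (e 0) : R) * coeff (e 0 + e 1) f := by
  rw [coeff_psubst, Finsupp.degree_fin_two, sum_eq_single_of_mem _ (self_mem_range_succ _)]
  · rw [coeff_X_zero_add_X_one_pow, if_pos rfl, mul_comm]
  · intro n _ hn
    rw [coeff_X_zero_add_X_one_pow, if_neg (Ne.symm hn), mul_zero]

lemma coeff_embed_mul_embed_mul_psubst (f g h : R⟦X⟧) (hg : constantCoeff g = 0)
    (e : Fin 2 →₀ ℕ) :
    MvPowerSeries.coeff e (embed 0 h * embed 1 h * psubst (embed 0 g * embed 1 g) f) =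
      ∑ n ∈ range (e 0 + e 1 + 1),
        coeff n f * (coeff (e 0) (h * g ^ n) * coeff (e 1) (h * g ^ n)) := by
  have hg' : MvPowerSeries.constantCoeff (embed 0 g * embed 1 g) = 0 := by
    rw [← MvPowerSeries.coeff_zero_eq_constantCoeff_apply, coeff_embed_zero_mul_embed_one]
    simp [hg]
  rw [coeff_mul_psubst hg', Finsupp.degree_fin_two]
  refine sum_congr rfl fun n _ => ?_
  rw [mul_pow, ← embed_pow, ← embed_pow, mul_mul_mul_comm, ← embed_mul, ← embed_mul,
    coeff_embed_zero_mul_embed_one]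

end TwoVariables

/-- Addition formula for rising powers: in the formal power series ring in two
variables `t, u`, `(1−t−u)^{−a} = (1−t)^{−a}·(1−u)^{−a}·Σ_k C(a+k−1,k)·(t/(1−t))^k·(u/(1−u))^k`,
where `C(a+k−1,k) = a⁽ᵏ⁾/k!`, so the last factor is the series
`(1−s)^{−a}` evaluated at `s = (t/(1−t))·(u/(1−u))`. -/
theorem binomSeries_addition [CommRing R] [Algebra ℚ R] (a : R) :
    psubst (MvPowerSeries.X 0 + MvPowerSeries.X 1) (binomSeries a) =
      embed 0 (binomSeries a) * embed 1 (binomSeries a) *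
        psubst (embed 0 geomSeries * embed 1 geomSeries) (binomSeries a) := by
  ext e
  rw [coeff_psubst_X_zero_add_X_one,
    coeff_embed_mul_embed_mul_psubst _ _ _ constantCoeff_geomSeries]
  simp only [← mul_assoc, coeff_binomSeries_mul_coeff_binomSeries_mul_geomSeries_pow,
    mul_right_comm _ (coeff (e 0) (binomSeries a)), ← sum_mul]
  rw [sum_choose_mul_coeff_binomSeries_mul_geomSeries_pow a (Nat.le_add_right _ _),
    mul_comm (coeff (e 1) _),
    coeff_binomSeries_mul_coeff_binomSeries_add]
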